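/- arXiv:2112.14863 — 2 statements merged into one kernel-verified Lean document; each statement's English description precedes it below -/
import Mathlib

section
/- Let P(x), Q(x) ∈ ℚ[x] be polynomials whose leading coefficients are non-negative, and let r₀ ∈ {0, 1}. If P(x)² - (a²x² + 4b)·Q(x)² = 4·(-b)^{r₀} (as polynomials over ℚ), then there exists a natural number n with n ≡ r₀ (mod 2) such that b^⌊n/2⌋·P(x) = L_n(x) and b^⌊n/2⌋·Q(x) = F_n(x). -/
open Polynomial

/-- The polynomial sequence `F_i(x)` in `ℤ[x]`:
`F_0 = 0`, `F_1 = 1`, `F_{i+2}(x) = a·x·F_{i+1}(x) + b·F_i(x)`. -/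
noncomputable def polyF (a b : ℤ) : ℕ → Polynomial ℤ
  | 0 => 0
  | 1 => 1
  | n + 2 => C a * X * polyF a b (n + 1) + C b * polyF a b n

/-- The polynomial sequence `L_i(x)` in `ℤ[x]`:
`L_0 = 2`, `L_1 = a·x`, `L_{i+2}(x) = a·x·L_{i+1}(x) + b·L_i(x)`. -/
noncomputable def polyL (a b : ℤ) : ℕ → Polynomial ℤ
  | 0 => 2
  | 1 => C a * X
  | n + 2 => C a * X * polyL a b (n + 1) + C b * polyL a b n

noncomputable def Fq (a b : ℤ) (n : ℕ) : Polynomial ℚ := (polyF a b n).map (Int.castRingHom ℚ)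
noncomputable def Lq (a b : ℤ) (n : ℕ) : Polynomial ℚ := (polyL a b n).map (Int.castRingHom ℚ)
noncomputable def Dq (a b : ℤ) : Polynomial ℚ := C (a : ℚ) ^ 2 * X ^ 2 + C (4 * (b : ℚ))

lemma Fq_zero (a b : ℤ) : Fq a b 0 = 0 := by simp [Fq, polyF]
lemma Fq_one (a b : ℤ) : Fq a b 1 = 1 := by simp [Fq, polyF]
lemma Fq_succ (a b : ℤ) (n : ℕ) :
    Fq a b (n+2) = C (a:ℚ) * X * Fq a b (n+1) + C (b:ℚ) * Fq a b n := by
  simp [Fq, polyF, Polynomial.map_add, Polynomial.map_mul]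
lemma Lq_zero (a b : ℤ) : Lq a b 0 = 2 := by simp [Lq, polyL]
lemma Lq_one (a b : ℤ) : Lq a b 1 = C (a:ℚ) * X := by simp [Lq, polyL]
lemma Lq_succ (a b : ℤ) (n : ℕ) :
    Lq a b (n+2) = C (a:ℚ) * X * Lq a b (n+1) + C (b:ℚ) * Lq a b n := by
  simp [Lq, polyL, Polynomial.map_add, Polynomial.map_mul]

lemma Dq_eq (a b : ℤ) : Dq a b = C (a:ℚ)^2 * X^2 + 4 * C (b:ℚ) := by
  rw [Dq, C_mul, map_ofNat]

lemma two_nz : (2 : Polynomial ℚ) ≠ 0 := by norm_num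

lemma step_up (a b : ℤ) (n : ℕ) :
    2 * Fq a b (n+1) = C (a:ℚ) * X * Fq a b n + Lq a b n ∧
    2 * Lq a b (n+1) = C (a:ℚ) * X * Lq a b n + Dq a b * Fq a b n := by
  induction n with
  | zero =>
    rw [Fq_zero, Fq_one, Lq_zero, Lq_one, Dq_eq]
    constructor <;> ring
  | succ n ih =>
    obtain ⟨h1, h2⟩ := ih
    rw [Dq_eq] at h2 ⊢
    constructor
    · refine mul_left_cancel₀ two_nz ?_
      rw [Fq_succ]
      linear_combination (C (a:ℚ) * X) * h1 - h2
    · refine mul_left_cancel₀ two_nz ?_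
      rw [Lq_succ]
      linear_combination (C (a:ℚ) * X) * h2 - (C (a:ℚ)^2 * X^2 + 4 * C (b:ℚ)) * h1

lemma step_down (a b : ℤ) (n : ℕ) :
    C (a:ℚ) * X * Lq a b (n+1) - Dq a b * Fq a b (n+1) = -(2 * C (b:ℚ)) * Lq a b n ∧
    C (a:ℚ) * X * Fq a b (n+1) - Lq a b (n+1) = -(2 * C (b:ℚ)) * Fq a b n := by
  obtain ⟨h1, h2⟩ := step_up a b n
  rw [Dq_eq] at h2 ⊢
  constructor
  · refine mul_left_cancel₀ two_nz ?_
    linear_combination (C (a:ℚ) * X) * h2 - (C (a:ℚ)^2 * X^2 + 4 * C (b:ℚ)) * h1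
  · refine mul_left_cancel₀ two_nz ?_
    linear_combination (C (a:ℚ) * X) * h1 - h2

lemma Dq_natDegree (a b : ℤ) (ha : (a:ℚ) ≠ 0) : (Dq a b).natDegree = 2 := by
  rw [Dq, ← C_pow, natDegree_add_C, natDegree_C_mul (pow_ne_zero 2 ha), natDegree_X_pow]

lemma Dq_ne_zero (a b : ℤ) (ha : (a:ℚ) ≠ 0) : Dq a b ≠ 0 := by
  intro h
  have := Dq_natDegree a b ha
  rw [h] at this
  simp at this

lemma Dq_leadingCoeff (a b : ℤ) (ha : (a:ℚ) ≠ 0) : (Dq a b).leadingCoeff = (a:ℚ)^2 := by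
  rw [leadingCoeff, Dq_natDegree a b ha, Dq, ← C_pow, coeff_add, coeff_C_mul, coeff_X_pow, coeff_C]
  norm_num

lemma deg_step (c d : ℚ) (p q : Polynomial ℚ) (m : ℕ) (hp : p.natDegree ≤ m) (hq : q.natDegree ≤ m) :
    (C c * X * p + C d * q).natDegree ≤ m + 1 := by
  refine (natDegree_add_le _ _).trans (max_le ?_ ?_)
  · refine (natDegree_mul_le).trans ?_
    have h1 : (C c * X).natDegree ≤ 1 := (natDegree_mul_le).trans (by simp)
    omega
  · refine (natDegree_mul_le).trans ?_
    have h2 : (C d).natDegree = 0 := natDegree_C d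
    omega

lemma coeff_step (c d : ℚ) (p q : Polynomial ℚ) (k : ℕ) :
    (C c * X * p + C d * q).coeff (k+1) = c * p.coeff k + d * q.coeff (k+1) := by
  rw [coeff_add, mul_assoc, coeff_C_mul, coeff_X_mul, coeff_C_mul]

lemma degFL (a b : ℤ) (ha : 0 < a) (hb : 0 < b) (n : ℕ) :
    ((Fq a b (n+1)).natDegree ≤ n ∧ 0 < (Fq a b (n+1)).coeff n ∧
     (Fq a b (n+2)).natDegree ≤ n+1 ∧ 0 < (Fq a b (n+2)).coeff (n+1)) ∧
    ((Lq a b n).natDegree ≤ n ∧ 0 < (Lq a b n).coeff n ∧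
     (Lq a b (n+1)).natDegree ≤ n+1 ∧ 0 < (Lq a b (n+1)).coeff (n+1)) := by
  have ha' : (0:ℚ) < (a:ℚ) := by exact_mod_cast ha
  have hb' : (0:ℚ) < (b:ℚ) := by exact_mod_cast hb
  induction n with
  | zero =>
    have e2 : Fq a b 2 = C (a:ℚ) * X * Fq a b 1 + C (b:ℚ) * Fq a b 0 := Fq_succ a b 0
    rw [e2, Fq_one, Fq_zero, Lq_zero, Lq_one]
    have hd : (C (a:ℚ) * X * 1 + C (b:ℚ) * 0).natDegree ≤ 1 := deg_step _ _ _ _ 0 (by simp) (by simp)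
    have hc : (C (a:ℚ) * X * 1 + C (b:ℚ) * 0).coeff 1 = (a:ℚ) := by
      rw [coeff_step]; simp
    refine ⟨⟨by simp, by simp, hd, by rw [hc]; exact ha'⟩, ⟨by simp, ?_, ?_, ?_⟩⟩
    · norm_num
    · exact (natDegree_mul_le).trans (by simp)
    · simpa using ha'
  | succ n ih =>
    obtain ⟨⟨fd1, fc1, fd2, fc2⟩, ⟨ld1, lc1, ld2, lc2⟩⟩ := ih
    refine ⟨⟨fd2, fc2, ?_, ?_⟩, ⟨ld2, lc2, ?_, ?_⟩⟩
    · rw [Fq_succ]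
      exact deg_step _ _ _ _ (n+1) fd2 (fd1.trans (by omega))
    · rw [Fq_succ, coeff_step, coeff_eq_zero_of_natDegree_lt (lt_of_le_of_lt fd1 (by omega))]
      simpa using mul_pos ha' fc2
    · rw [Lq_succ]
      exact deg_step _ _ _ _ (n+1) ld2 (ld1.trans (by omega))
    · rw [Lq_succ, coeff_step, coeff_eq_zero_of_natDegree_lt (lt_of_le_of_lt ld1 (by omega))]
      simpa using mul_pos ha' lc2

lemma Lq_lc (a b : ℤ) (ha : 0 < a) (hb : 0 < b) (n : ℕ) :
    0 < (Lq a b n).leadingCoeff ∧ Lq a b n ≠ 0 := by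
  obtain ⟨-, ⟨hd, hc, -, -⟩⟩ := degFL a b ha hb n
  have hne : Lq a b n ≠ 0 := fun h => by rw [h] at hc; simp at hc
  have hdeq : (Lq a b n).natDegree = n :=
    le_antisymm hd (le_natDegree_of_ne_zero (ne_of_gt hc))
  exact ⟨by rw [leadingCoeff, hdeq]; exact hc, hne⟩

lemma Fq_lc (a b : ℤ) (ha : 0 < a) (hb : 0 < b) (n : ℕ) :
    0 < (Fq a b (n+1)).leadingCoeff ∧ Fq a b (n+1) ≠ 0 := by
  obtain ⟨⟨hd, hc, -, -⟩, -⟩ := degFL a b ha hb n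
  have hne : Fq a b (n+1) ≠ 0 := fun h => by rw [h] at hc; simp at hc
  have hdeq : (Fq a b (n+1)).natDegree = n :=
    le_antisymm hd (le_natDegree_of_ne_zero (ne_of_gt hc))
  exact ⟨by rw [leadingCoeff, hdeq]; exact hc, hne⟩

/-- The conclusion predicate of the classification. -/
def Concl (a b : ℤ) (P Q : Polynomial ℚ) (r : ℕ) : Prop :=
  ∃ n : ℕ, ∃ ε ε' : ℚ, (ε = 1 ∨ ε = -1) ∧ (ε' = 1 ∨ ε' = -1) ∧ n % 2 = r % 2 ∧
    C ((b:ℚ)^(n/2)) * P = C ε * Lq a b n ∧ C ((b:ℚ)^(n/2)) * Q = C ε' * Fq a b n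

lemma facts (a b : ℤ) (ha : 0 < a) (P Q : Polynomial ℚ) (u : ℚ) (hQ : Q ≠ 0)
    (heq : P^2 - Dq a b * Q^2 = C u) :
    P ≠ 0 ∧ P.natDegree = Q.natDegree + 1 ∧
      P.leadingCoeff^2 = (a:ℚ)^2 * Q.leadingCoeff^2 := by
  have haq : (a:ℚ) ≠ 0 := by exact_mod_cast ha.ne'
  have e : P^2 = Dq a b * Q^2 + C u := by linear_combination heq
  have h1 : (Dq a b * Q^2).natDegree = 2 + 2*Q.natDegree := by
    rw [natDegree_mul (Dq_ne_zero a b haq) (pow_ne_zero _ hQ), Dq_natDegree a b haq,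
      natDegree_pow]
  have h2 : (P^2).natDegree = 2 + 2*Q.natDegree := by rw [e, natDegree_add_C, h1]
  have h3 : 2 * P.natDegree = 2 + 2*Q.natDegree := by rw [← natDegree_pow]; exact h2
  have hPne : P ≠ 0 := by
    intro h
    rw [h] at h3
    simp only [natDegree_zero, mul_zero] at h3
    omega
  refine ⟨hPne, by omega, ?_⟩
  have hlc : (P^2).leadingCoeff = P.leadingCoeff^2 := leadingCoeff_pow P 2
  have hlc2 : (P^2).leadingCoeff = (Dq a b * Q^2).leadingCoeff := by
    rw [leadingCoeff, leadingCoeff, h2, ← h1, e, coeff_add, coeff_C,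
      if_neg (by rw [h1]; omega : ¬(Dq a b * Q^2).natDegree = 0), add_zero]
  rw [hlc2, leadingCoeff_mul, leadingCoeff_pow, Dq_leadingCoeff a b haq] at hlc
  exact hlc.symm

lemma descent_core (a b : ℤ) (P Q P₁ Q₁ : Polynomial ℚ) (c₀ d₀ u v : ℚ) (hc : c₀ ≠ 0)
    (hcd : c₀ * d₀ = -(4*(b:ℚ)))
    (huv : c₀^2 * v = -(4*(b:ℚ)) * u)
    (hcP : C c₀ * P₁ = C (a:ℚ) * X * P - Dq a b * Q)
    (hcQ : C c₀ * Q₁ = C (a:ℚ) * X * Q - P)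
    (heq : P^2 - Dq a b * Q^2 = C u) :
    (P₁^2 - Dq a b * Q₁^2 = C v) ∧ (C (a:ℚ)*X*P₁ + Dq a b*Q₁ = C d₀ * P) ∧
      (C (a:ℚ)*X*Q₁ + P₁ = C d₀ * Q) := by
  have hCc : (C c₀ : Polynomial ℚ) ≠ 0 := fun h => hc (by simpa using (C_eq_zero.mp h))
  have hcd' : C c₀ * C d₀ = -(4 * C (b:ℚ)) := by
    rw [← C_mul, hcd]
    rw [map_neg, C_mul, map_ofNat]
  have huv' : C c₀^2 * C v = -(4 * C (b:ℚ)) * C u := by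
    rw [← C_pow, ← C_mul, huv, C_mul, map_neg, C_mul, map_ofNat]
  rw [Dq_eq] at hcP heq ⊢
  refine ⟨?_, ?_, ?_⟩
  · refine mul_left_cancel₀ (pow_ne_zero 2 hCc) ?_
    linear_combination (C c₀*P₁ + (C (a:ℚ)*X*P - (C (a:ℚ)^2*X^2 + 4*C (b:ℚ))*Q))*hcP
      - (C (a:ℚ)^2*X^2 + 4*C (b:ℚ))*(C c₀*Q₁ + (C (a:ℚ)*X*Q - P))*hcQ
      + (C (a:ℚ)^2*X^2 - (C (a:ℚ)^2*X^2 + 4*C (b:ℚ)))*heq - huv'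
  · refine mul_left_cancel₀ hCc ?_
    linear_combination (C (a:ℚ)*X)*hcP + (C (a:ℚ)^2*X^2 + 4*C (b:ℚ))*hcQ - P*hcd'
  · refine mul_left_cancel₀ hCc ?_
    linear_combination (C (a:ℚ)*X)*hcQ + hcP - Q*hcd'

lemma base (a b : ℤ) (hb : 0 < b) (P : Polynomial ℚ) (r : ℕ) (hr : r = 0 ∨ r = 1)
    (heq : P^2 - Dq a b * (0:Polynomial ℚ)^2 = C (4*(-(b:ℚ))^r)) : Concl a b P 0 r := by
  have hbq : (0:ℚ) < (b:ℚ) := by exact_mod_cast hb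
  have heq' : P^2 = C (4*(-(b:ℚ))^r) := by linear_combination heq
  have hcne : (4*(-(b:ℚ))^r) ≠ 0 :=
    mul_ne_zero (by norm_num) (pow_ne_zero r (neg_ne_zero.mpr hbq.ne'))
  have hPne : P ≠ 0 := by
    intro h
    rw [h] at heq'
    exact hcne (C_eq_zero.mp (by simpa using heq'.symm))
  have hdeg : P.natDegree = 0 := by
    have := congrArg natDegree heq'
    rw [natDegree_pow, natDegree_C] at this
    omega
  obtain ⟨c, hc⟩ := Polynomial.natDegree_eq_zero.mp hdeg
  have hc2 : c^2 = 4*(-(b:ℚ))^r := by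
    rw [← hc, ← map_pow] at heq'
    exact C_injective heq'
  rcases hr with rfl | rfl
  · rw [pow_zero, mul_one] at hc2
    have h4 : (c-2)*(c+2) = 0 := by linear_combination hc2
    rcases mul_eq_zero.mp h4 with h | h
    · refine ⟨0, 1, 1, Or.inl rfl, Or.inl rfl, rfl, ?_, ?_⟩
      · rw [Lq_zero, ← hc, show c = 2 by linarith]
        norm_num
        rw [map_ofNat]
      · rw [Fq_zero]
        simp
    · refine ⟨0, -1, 1, Or.inr rfl, Or.inl rfl, rfl, ?_, ?_⟩
      · rw [Lq_zero, ← hc, show c = -2 by linarith]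
        norm_num
        exact map_ofNat C 2
      · rw [Fq_zero]
        simp
  · exfalso
    rw [pow_one] at hc2
    nlinarith [sq_nonneg c]

lemma deg_drop (a b : ℤ) (ha : 0 < a) (P Q Q₁ : Polynomial ℚ) (c₀ : ℚ) (hc₀ : c₀ ≠ 0) (u : ℚ)
    (hQ0 : Q ≠ 0) (hdP : P.natDegree = Q.natDegree + 1)
    (hlc : P.leadingCoeff = (a:ℚ)*Q.leadingCoeff)
    (hcQ : C c₀ * Q₁ = C (a:ℚ)*X*Q - P) (heq : P^2 - Dq a b*Q^2 = C u) :
    (if Q₁ = 0 then 0 else Q₁.natDegree + 1) ≤ Q.natDegree := by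
  have haq : (0:ℚ) < (a:ℚ) := by exact_mod_cast ha
  have hlcQ : Q.leadingCoeff ≠ 0 := leadingCoeff_ne_zero.mpr hQ0
  by_cases h0 : Q₁ = 0
  · simp [h0]
  · rw [if_neg h0]
    have hCc : (C c₀ : Polynomial ℚ) ≠ 0 := fun h => hc₀ (by simpa using (C_eq_zero.mp h))
    have hW2ne : C (a:ℚ)*X*Q - P ≠ 0 := by
      rw [← hcQ]
      exact mul_ne_zero hCc h0
    have hdQ₁ : Q₁.natDegree = (C (a:ℚ)*X*Q - P).natDegree := by
      rw [← hcQ, natDegree_C_mul hc₀]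
    have hplusc : (C (a:ℚ)*X*Q + P).coeff (Q.natDegree + 1) = 2*(a:ℚ)*Q.leadingCoeff := by
      rw [coeff_add, mul_assoc, coeff_C_mul, coeff_X_mul, ← hdP, coeff_natDegree,
        coeff_natDegree, hlc]
      ring
    have hplusne : C (a:ℚ)*X*Q + P ≠ 0 := by
      intro h
      rw [h, coeff_zero] at hplusc
      exact (mul_ne_zero (by positivity) hlcQ) hplusc.symm
    have hprod : (C (a:ℚ)*X*Q - P) * (C (a:ℚ)*X*Q + P) = -(4*C (b:ℚ))*Q^2 - C u := by
      rw [Dq_eq] at heq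
      linear_combination -heq
    have hdeg_prod : (C (a:ℚ)*X*Q - P).natDegree + (C (a:ℚ)*X*Q + P).natDegree
        = (-(4*C (b:ℚ))*Q^2 - C u).natDegree := by
      rw [← hprod, natDegree_mul hW2ne hplusne]
    have hrhs : (-(4*C (b:ℚ))*Q^2 - C u).natDegree ≤ 2*Q.natDegree := by
      refine (natDegree_sub_le _ _).trans (max_le ?_ ?_)
      · refine natDegree_mul_le.trans ?_
        have h1 : (-(4*C (b:ℚ))).natDegree = 0 := by
          rw [show -(4*C (b:ℚ)) = C (-(4*(b:ℚ))) from by rw [map_neg, C_mul, map_ofNat], natDegree_C]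
        rw [natDegree_pow]
        omega
      · simp
    have hge : Q.natDegree + 1 ≤ (C (a:ℚ)*X*Q + P).natDegree := by
      refine le_natDegree_of_ne_zero ?_
      rw [hplusc]
      exact mul_ne_zero (by positivity) hlcQ
    omega

lemma key_up (a b : ℤ) (P Q P₁ Q₁ : Polynomial ℚ) (d₀ ε : ℚ) (t n₁ : ℕ)
    (IP : C (a:ℚ)*X*P₁ + Dq a b*Q₁ = C d₀*P) (IQ : C (a:ℚ)*X*Q₁ + P₁ = C d₀*Q)
    (hL : C ((b:ℚ)^t)*P₁ = C ε*Lq a b n₁) (hF : C ((b:ℚ)^t)*Q₁ = C ε*Fq a b n₁) :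
    C d₀*(C ((b:ℚ)^t)*P) = C ε*(2*Lq a b (n₁+1)) ∧
    C d₀*(C ((b:ℚ)^t)*Q) = C ε*(2*Fq a b (n₁+1)) := by
  obtain ⟨su1, su2⟩ := step_up a b n₁
  constructor
  · linear_combination (-(C ((b:ℚ)^t)))*IP + (C (a:ℚ)*X)*hL + (Dq a b)*hF - (C ε)*su2
  · linear_combination (-(C ((b:ℚ)^t)))*IQ + (C (a:ℚ)*X)*hF + hL - (C ε)*su1

lemma key_down (a b : ℤ) (P Q P₁ Q₁ : Polynomial ℚ) (d₀ ε : ℚ) (t m : ℕ)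
    (IP : C (a:ℚ)*X*P₁ + Dq a b*Q₁ = C d₀*P) (IQ : C (a:ℚ)*X*Q₁ + P₁ = C d₀*Q)
    (hL : C ((b:ℚ)^t)*P₁ = C ε*Lq a b (m+1)) (hF : C ((b:ℚ)^t)*Q₁ = -(C ε)*Fq a b (m+1)) :
    C d₀*(C ((b:ℚ)^t)*P) = C ε*(-(2*C (b:ℚ))*Lq a b m) ∧
    C d₀*(C ((b:ℚ)^t)*Q) = C ε*(2*C (b:ℚ)*Fq a b m) := by
  obtain ⟨sd1, sd2⟩ := step_down a b m
  constructor
  · linear_combination (-(C ((b:ℚ)^t)))*IP + (C (a:ℚ)*X)*hL + (Dq a b)*hF + (C ε)*sd1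
  · linear_combination (-(C ((b:ℚ)^t)))*IQ + (C (a:ℚ)*X)*hF + hL + (-(C ε))*sd2

lemma neg_twoCb_ne (b : ℤ) (hb : 0 < b) : -(2*C (b:ℚ)) ≠ 0 := by
  have hbq : ((b:ℚ)) ≠ 0 := by exact_mod_cast hb.ne'
  simp only [neg_ne_zero]
  exact mul_ne_zero two_ne_zero (fun h => hbq (C_eq_zero.mp h))

lemma twoCb_ne (b : ℤ) (hb : 0 < b) : (2*C (b:ℚ)) ≠ 0 := by
  have hbq : ((b:ℚ)) ≠ 0 := by exact_mod_cast hb.ne'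
  exact mul_ne_zero two_ne_zero (fun h => hbq (C_eq_zero.mp h))

lemma descent (a b : ℤ) (ha : 0 < a) (hb : 0 < b) (P Q : Polynomial ℚ) (r : ℕ)
    (hr : r = 0 ∨ r = 1) (hQ0 : Q ≠ 0)
    (hlc : P.leadingCoeff = (a:ℚ) * Q.leadingCoeff)
    (heq : P^2 - Dq a b * Q^2 = C (4*(-(b:ℚ))^r))
    (ih : ∀ P' Q' : Polynomial ℚ, ∀ r' : ℕ, (r' = 0 ∨ r' = 1) →
      (if Q' = 0 then 0 else Q'.natDegree + 1) ≤ Q.natDegree →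
      P'^2 - Dq a b * Q'^2 = C (4*(-(b:ℚ))^r') → Concl a b P' Q' r') :
    Concl a b P Q r := by
  have hbq : (0:ℚ) < (b:ℚ) := by exact_mod_cast hb
  obtain ⟨hPne, hdP, -⟩ := facts a b ha P Q _ hQ0 heq
  have hCm : ∀ x : ℚ, -(2*C (x:ℚ)) = C (-(2*x)) := fun x => by
    rw [map_neg, C_mul, map_ofNat]
  rcases hr with rfl | rfl
  · -- r = 0 : c₀ = 2, d₀ = -2b, r' = 1
    have hc₀ : (2:ℚ) ≠ 0 := two_ne_zero
    set P₁ : Polynomial ℚ := C (2:ℚ)⁻¹ * (C (a:ℚ)*X*P - Dq a b*Q) with hP₁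
    set Q₁ : Polynomial ℚ := C (2:ℚ)⁻¹ * (C (a:ℚ)*X*Q - P) with hQ₁
    have hcP : C (2:ℚ) * P₁ = C (a:ℚ)*X*P - Dq a b*Q := by
      rw [hP₁, ← mul_assoc, ← C_mul, mul_inv_cancel₀ hc₀, C_1, one_mul]
    have hcQ : C (2:ℚ) * Q₁ = C (a:ℚ)*X*Q - P := by
      rw [hQ₁, ← mul_assoc, ← C_mul, mul_inv_cancel₀ hc₀, C_1, one_mul]
    have hcd : (2:ℚ)*(-(2*(b:ℚ))) = -(4*(b:ℚ)) := by ring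
    have huv : (2:ℚ)^2 * (4*(-(b:ℚ))^1) = -(4*(b:ℚ)) * (4*(-(b:ℚ))^0) := by ring
    obtain ⟨heq₁, IP, IQ⟩ := descent_core a b P Q P₁ Q₁ 2 (-(2*(b:ℚ)))
      (4*(-(b:ℚ))^0) (4*(-(b:ℚ))^1) hc₀ hcd huv hcP hcQ heq
    obtain ⟨n₁, ε, ε', hε, hε', hpar₁, hL, hF⟩ := ih P₁ Q₁ 1 (Or.inr rfl)
      (deg_drop a b ha P Q Q₁ 2 hc₀ _ hQ0 hdP hlc hcQ heq) heq₁
    have hodd : n₁ % 2 = 1 := by omega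
    have hεflip : (-ε = 1 ∨ -ε = -1) := by
      rcases hε with rfl|rfl
      · exact Or.inr (by norm_num)
      · exact Or.inl (by norm_num)
    by_cases hud : ε' = ε ∨ Fq a b n₁ = 0
    · have hF' : C ((b:ℚ)^(n₁/2))*Q₁ = C ε*Fq a b n₁ := by
        rcases hud with rfl | h0
        · exact hF
        · rw [h0, mul_zero] at hF ⊢
          exact hF
      obtain ⟨kP, kQ⟩ := key_up a b P Q P₁ Q₁ _ ε (n₁/2) n₁ IP IQ hL hF'
      rw [← hCm b] at kP kQ
      refine ⟨n₁+1, -ε, -ε, hεflip, hεflip, by omega, ?_, ?_⟩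
      · rw [show (n₁+1)/2 = n₁/2 + 1 by omega, pow_succ, C_mul, map_neg]
        refine mul_left_cancel₀ two_nz ?_
        linear_combination -kP
      · rw [show (n₁+1)/2 = n₁/2 + 1 by omega, pow_succ, C_mul, map_neg]
        refine mul_left_cancel₀ two_nz ?_
        linear_combination -kQ
    · push_neg at hud
      obtain ⟨hne, hFne⟩ := hud
      have hε'' : ε' = -ε := by
        rcases hε with rfl|rfl <;> rcases hε' with rfl|rfl
        · exact absurd rfl hne
        · norm_num
        · norm_num
        · exact absurd rfl hne
      have hF' : C ((b:ℚ)^(n₁/2))*Q₁ = -(C ε)*Fq a b n₁ := by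
        rw [hF, hε'', map_neg]
      have hn₁ : n₁ ≠ 0 := fun h => hFne (by rw [h, Fq_zero])
      obtain ⟨m, rfl⟩ : ∃ m, n₁ = m+1 := ⟨n₁-1, by omega⟩
      obtain ⟨kP, kQ⟩ := key_down a b P Q P₁ Q₁ _ ε ((m+1)/2) m IP IQ hL hF'
      rw [← hCm b] at kP kQ
      refine ⟨m, ε, -ε, hε, hεflip, by omega, ?_, ?_⟩
      · rw [show m/2 = (m+1)/2 by omega]
        refine mul_left_cancel₀ (neg_twoCb_ne b hb) ?_
        linear_combination kP
      · rw [show m/2 = (m+1)/2 by omega, map_neg]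
        refine mul_left_cancel₀ (neg_twoCb_ne b hb) ?_
        linear_combination kQ
  · -- r = 1 : c₀ = -2b, d₀ = 2, r' = 0
    have hc₀ : (-(2*(b:ℚ))) ≠ 0 := by
      intro h
      nlinarith
    set P₁ : Polynomial ℚ := C (-(2*(b:ℚ)))⁻¹ * (C (a:ℚ)*X*P - Dq a b*Q) with hP₁
    set Q₁ : Polynomial ℚ := C (-(2*(b:ℚ)))⁻¹ * (C (a:ℚ)*X*Q - P) with hQ₁
    have hcP : C (-(2*(b:ℚ))) * P₁ = C (a:ℚ)*X*P - Dq a b*Q := by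
      rw [hP₁, ← mul_assoc, ← C_mul, mul_inv_cancel₀ hc₀, C_1, one_mul]
    have hcQ : C (-(2*(b:ℚ))) * Q₁ = C (a:ℚ)*X*Q - P := by
      rw [hQ₁, ← mul_assoc, ← C_mul, mul_inv_cancel₀ hc₀, C_1, one_mul]
    have hcd : (-(2*(b:ℚ)))*(2:ℚ) = -(4*(b:ℚ)) := by ring
    have huv : (-(2*(b:ℚ)))^2 * (4*(-(b:ℚ))^0) = -(4*(b:ℚ)) * (4*(-(b:ℚ))^1) := by ring
    obtain ⟨heq₁, IP, IQ⟩ := descent_core a b P Q P₁ Q₁ (-(2*(b:ℚ))) 2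
      (4*(-(b:ℚ))^1) (4*(-(b:ℚ))^0) hc₀ hcd huv hcP hcQ heq
    obtain ⟨n₁, ε, ε', hε, hε', hpar₁, hL, hF⟩ := ih P₁ Q₁ 0 (Or.inl rfl)
      (deg_drop a b ha P Q Q₁ _ hc₀ _ hQ0 hdP hlc hcQ heq) heq₁
    have heven : n₁ % 2 = 0 := by omega
    have hεflip : (-ε = 1 ∨ -ε = -1) := by
      rcases hε with rfl|rfl
      · exact Or.inr (by norm_num)
      · exact Or.inl (by norm_num)
    by_cases hud : ε' = ε ∨ Fq a b n₁ = 0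
    · have hF' : C ((b:ℚ)^(n₁/2))*Q₁ = C ε*Fq a b n₁ := by
        rcases hud with rfl | h0
        · exact hF
        · rw [h0, mul_zero] at hF ⊢
          exact hF
      obtain ⟨kP, kQ⟩ := key_up a b P Q P₁ Q₁ _ ε (n₁/2) n₁ IP IQ hL hF'
      rw [map_ofNat] at kP kQ
      refine ⟨n₁+1, ε, ε, hε, hε, by omega, ?_, ?_⟩
      · rw [show (n₁+1)/2 = n₁/2 by omega]
        refine mul_left_cancel₀ two_nz ?_
        linear_combination kP
      · rw [show (n₁+1)/2 = n₁/2 by omega]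
        refine mul_left_cancel₀ two_nz ?_
        linear_combination kQ
    · push_neg at hud
      obtain ⟨hne, hFne⟩ := hud
      have hε'' : ε' = -ε := by
        rcases hε with rfl|rfl <;> rcases hε' with rfl|rfl
        · exact absurd rfl hne
        · norm_num
        · norm_num
        · exact absurd rfl hne
      have hF' : C ((b:ℚ)^(n₁/2))*Q₁ = -(C ε)*Fq a b n₁ := by
        rw [hF, hε'', map_neg]
      have hn₁ : n₁ ≠ 0 := fun h => hFne (by rw [h, Fq_zero])
      obtain ⟨m, rfl⟩ : ∃ m, n₁ = m+1 := ⟨n₁-1, by omega⟩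
      obtain ⟨kP, kQ⟩ := key_down a b P Q P₁ Q₁ _ ε ((m+1)/2) m IP IQ hL hF'
      rw [map_ofNat] at kP kQ
      rw [show (m+1)/2 = m/2 + 1 by omega, pow_succ, C_mul] at kP kQ
      refine ⟨m, -ε, ε, hεflip, hε, by omega, ?_, ?_⟩
      · rw [map_neg]
        refine mul_left_cancel₀ (twoCb_ne b hb) ?_
        linear_combination kP
      · refine mul_left_cancel₀ (twoCb_ne b hb) ?_
        linear_combination kQ

lemma aux (a b : ℤ) (ha : 0 < a) (hb : 0 < b) (k : ℕ) :
    ∀ P Q : Polynomial ℚ, ∀ r : ℕ, (r = 0 ∨ r = 1) →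
    (if Q = 0 then 0 else Q.natDegree + 1) ≤ k →
    P^2 - Dq a b * Q^2 = C (4*(-(b:ℚ))^r) → Concl a b P Q r := by
  induction k with
  | zero =>
    intro P Q r hr hk heq
    have hQ : Q = 0 := by
      by_contra h
      rw [if_neg h] at hk
      omega
    subst hQ
    exact base a b hb P r hr heq
  | succ k ihk =>
    intro P Q r hr hk heq
    by_cases hQ : Q = 0
    · subst hQ
      exact base a b hb P r hr heq
    · rw [if_neg hQ] at hk
      obtain ⟨hPne, hdP, hlc2⟩ := facts a b ha P Q _ hQ heq
      have ih' : ∀ P' Q' : Polynomial ℚ, ∀ r' : ℕ, (r' = 0 ∨ r' = 1) →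
          (if Q' = 0 then 0 else Q'.natDegree + 1) ≤ Q.natDegree →
          P'^2 - Dq a b * Q'^2 = C (4*(-(b:ℚ))^r') → Concl a b P' Q' r' :=
        fun P' Q' r' hr' hb' heq' => ihk P' Q' r' hr' (hb'.trans (by omega)) heq'
      have hsplit : P.leadingCoeff = (a:ℚ)*Q.leadingCoeff ∨
          P.leadingCoeff = -((a:ℚ)*Q.leadingCoeff) := by
        have h0 : (P.leadingCoeff - (a:ℚ)*Q.leadingCoeff) *
            (P.leadingCoeff + (a:ℚ)*Q.leadingCoeff) = 0 := by linear_combination hlc2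
        rcases mul_eq_zero.mp h0 with h|h
        · left; linarith
        · right; linarith
      rcases hsplit with h|h
      · exact descent a b ha hb P Q r hr hQ h heq ih'
      · have hQn : (-Q) ≠ 0 := neg_ne_zero.mpr hQ
        have heqn : P^2 - Dq a b * (-Q)^2 = C (4*(-(b:ℚ))^r) := by linear_combination heq
        have hlcn : P.leadingCoeff = (a:ℚ)*(-Q).leadingCoeff := by
          rw [leadingCoeff_neg, h]
          ring
        obtain ⟨n, ε, ε', hε, hε', hpar, hPe, hQe⟩ :=
          descent a b ha hb P (-Q) r hr hQn hlcn heqn (by rw [natDegree_neg]; exact ih')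
        have hεflip : (-ε' = 1 ∨ -ε' = -1) := by
          rcases hε' with rfl|rfl
          · exact Or.inr (by norm_num)
          · exact Or.inl (by norm_num)
        refine ⟨n, ε, -ε', hε, hεflip, hpar, hPe, ?_⟩
        rw [map_neg]
        linear_combination -hQe

theorem pell_like_polynomial_solutions
    (a b : ℤ) (ha : 0 < a) (hb : 0 < b)
    (P Q : Polynomial ℚ) (hP : 0 ≤ P.leadingCoeff) (hQ : 0 ≤ Q.leadingCoeff)
    (r₀ : ℕ) (hr₀ : r₀ = 0 ∨ r₀ = 1)
    (heq : P ^ 2 - (C (a : ℚ) ^ 2 * X ^ 2 + C (4 * (b : ℚ))) * Q ^ 2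
        = C (4 * (-(b : ℚ)) ^ r₀)) :
    ∃ n : ℕ, n % 2 = r₀ % 2 ∧
      C ((b : ℚ) ^ (n / 2)) * P = (polyL a b n).map (Int.castRingHom ℚ) ∧
      C ((b : ℚ) ^ (n / 2)) * Q = (polyF a b n).map (Int.castRingHom ℚ) := by
  have hbq : (0:ℚ) < (b:ℚ) := by exact_mod_cast hb
  have heq' : P^2 - Dq a b * Q^2 = C (4*(-(b:ℚ))^r₀) := by rw [Dq]; exact heq
  obtain ⟨n, ε, ε', hε, hε', hpar, hPe, hQe⟩ :=
    aux a b ha hb (if Q = 0 then 0 else Q.natDegree + 1) P Q r₀ hr₀ le_rfl heq'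
  have hCε : (C ε : Polynomial ℚ) ≠ 0 :=
    fun h => by rcases hε with rfl|rfl <;> simpa using C_eq_zero.mp h
  have hCε' : (C ε' : Polynomial ℚ) ≠ 0 :=
    fun h => by rcases hε' with rfl|rfl <;> simpa using C_eq_zero.mp h
  have hPne : P ≠ 0 := by
    intro h
    rw [h, mul_zero] at hPe
    exact (mul_ne_zero hCε (Lq_lc a b ha hb n).2) hPe.symm
  have hlcP : 0 < P.leadingCoeff :=
    lt_of_le_of_ne hP (Ne.symm (leadingCoeff_ne_zero.mpr hPne))
  have hlcL := (Lq_lc a b ha hb n).1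
  have heps : ε = 1 := by
    have h := congrArg leadingCoeff hPe
    rw [leadingCoeff_mul, leadingCoeff_mul, leadingCoeff_C, leadingCoeff_C] at h
    have hbp : (0:ℚ) < (b:ℚ)^(n/2) := by positivity
    rcases hε with rfl|rfl
    · rfl
    · exfalso
      nlinarith
  subst heps
  rw [C_1, one_mul] at hPe
  by_cases hQ0 : Q = 0
  · rw [hQ0, mul_zero] at hQe
    have hFz : Fq a b n = 0 := by
      rcases mul_eq_zero.mp hQe.symm with h|h
      · exact absurd h hCε'
      · exact h
    have hn0 : n = 0 := by
      by_contra h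
      obtain ⟨m, rfl⟩ : ∃ m, n = m + 1 := ⟨n-1, by omega⟩
      exact (Fq_lc a b ha hb m).2 hFz
    subst hn0
    refine ⟨0, hpar, hPe, ?_⟩
    rw [hQ0, mul_zero]
    exact (Fq_zero a b).symm
  · have hn : n ≠ 0 := by
      intro h
      subst h
      rw [Fq_zero, mul_zero] at hQe
      rcases mul_eq_zero.mp hQe with h|h
      · exact (C_ne_zero.mpr (by positivity : ((b:ℚ)^(0/2)) ≠ 0)) h
      · exact hQ0 h
    obtain ⟨m, rfl⟩ : ∃ m, n = m + 1 := ⟨n-1, by omega⟩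
    have hlcQ : 0 < Q.leadingCoeff :=
      lt_of_le_of_ne hQ (Ne.symm (leadingCoeff_ne_zero.mpr hQ0))
    have hlcF := (Fq_lc a b ha hb m).1
    have heps' : ε' = 1 := by
      have h := congrArg leadingCoeff hQe
      rw [leadingCoeff_mul, leadingCoeff_mul, leadingCoeff_C, leadingCoeff_C] at h
      have hbp : (0:ℚ) < (b:ℚ)^((m+1)/2) := by positivity
      rcases hε' with rfl|rfl
      · rfl
      · exfalso
        nlinarith
    subst heps'
    rw [C_1, one_mul] at hQe
    exact ⟨m+1, hpar, hPe, hQe⟩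
end

section
/- For every natural number n, the polynomial identity L_{2n+1}(x) = (a²x² + 4b)·F_{n+1}(x)·F_n(x) + (-b)^n·a·x holds in ℤ[x]. -/
open Polynomial

/-- Cassini-type identity for `polyF`. -/
lemma cassini (a b : ℤ) (k : ℕ) :
    polyF a b (k+2) * polyF a b k - polyF a b (k+1)^2 = -(-C b)^k := by
  induction k with
  | zero => simp [polyF]
  | succ k ih =>
    have h2 : polyF a b (k+2) = C a * X * polyF a b (k+1) + C b * polyF a b k := rfl
    have h3 : polyF a b (k+1+2) = C a * X * polyF a b (k+2) + C b * polyF a b (k+1) := rfl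
    rw [h2] at ih
    rw [h3, h2]
    linear_combination (-C b) * ih

/-- Simultaneous identities for odd and even indexed `polyL`. -/
lemma pairLem (a b : ℤ) (n : ℕ) :
    polyL a b (2*n+1)
      = (C a ^ 2 * X ^ 2 + C (4 * b)) * polyF a b (n+1) * polyF a b n
        + (-C b)^n * C a * X ∧
    polyL a b (2*n+2)
      = (C a ^ 2 * X ^ 2 + C (4 * b)) * polyF a b (n+1)^2 + 2 * (-C b)^(n+1) := by
  induction n with
  | zero =>
    constructor
    · simp [polyL, polyF]
    · show C a * X * polyL a b 1 + C b * polyL a b 0 = _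
      simp [polyL, polyF]; ring
  | succ n ih =>
    obtain ⟨h1, h2⟩ := ih
    have hc := cassini a b n
    have hL3 : polyL a b (2*(n+1)+1)
        = C a * X * polyL a b (2*n+2) + C b * polyL a b (2*n+1) := by
      rw [show 2*(n+1)+1 = (2*n+1)+2 from by ring]; rfl
    have hL4 : polyL a b (2*(n+1)+2)
        = C a * X * polyL a b (2*(n+1)+1) + C b * polyL a b (2*n+2) := by
      rw [show 2*(n+1)+2 = (2*n+2)+2 from by ring, show 2*(n+1)+1 = (2*n+2)+1 from by ring]; rfl
    have hF2 : polyF a b (n+2) = C a * X * polyF a b (n+1) + C b * polyF a b n := rfl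
    constructor
    · rw [hL3, h1, h2, show n+1+1 = n+2 from rfl, hF2]
      ring
    · rw [hF2] at hc
      rw [hL4, hL3, h1, h2, show n+1+1 = n+2 from rfl, hF2]
      simp only [map_mul, map_ofNat]
      linear_combination (-(C a ^ 2 * X ^ 2 + 4 * C b) * C b) * hc

theorem L_odd_identity_via_F (a b : ℤ) (ha : 0 < a) (hb : 0 < b) (n : ℕ) :
    polyL a b (2 * n + 1)
      = (C a ^ 2 * X ^ 2 + C (4 * b)) * polyF a b (n + 1) * polyF a b n
        + C ((-b) ^ n) * C a * X := by
  have := (pairLem a b n).1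
  rw [this, map_pow, map_neg]
end
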